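/- Let m ≥ 2 and L with 256 ≤ L and L·m ≤ 2^64 − 1. Then for the payload encoder processing a byte string of length n, where each byte update multiplies the state by at most 256 within the window [L, L·m) and each renormalization step divides by m, the total number of emitted payload digits is at most n·⌈log_m 256⌉ + 1. -/
import Mathlib


/-- Fixed-width `k`-digit little-endian base-`m` encoding of `x`. -/
def encodePrefix (m k x : ℕ) : List ℕ :=
  (List.range k).map (fun i => x / m ^ i % m)

/-- Decode the first `k` digits of a stream as a little-endian base-`m` number. -/
def decodePrefix (m k : ℕ) (ds : List ℕ) : ℕ :=
  ∑ i ∈ Finset.range k, ds.getD i 0 * m ^ i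

/-- Encoder-side renormalization: while `T ≤ x`, emit `x % m` and set `x ← x / m`.
Digits are returned least-significant first (emission order). -/
def renorm (m T x : ℕ) : ℕ × List ℕ :=
  if _h : 1 ≤ T ∧ T ≤ x ∧ 2 ≤ m then
    let r := renorm m T (x / m)
    (r.1, x % m :: r.2)
  else
    (x, [])
termination_by x
decreasing_by exact Nat.div_lt_self (by omega) (by omega)

/-- Encoder-side renormalization before absorbing byte `b`:
while `L*m ≤ 256*x + b`, emit `x % m` and set `x ← x / m`. -/
def renormP (m L b x : ℕ) : ℕ × List ℕ :=
  if _h : 1 ≤ x ∧ 2 ≤ m ∧ L * m ≤ 256 * x + b then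
    let r := renormP m L b (x / m)
    (r.1, x % m :: r.2)
  else
    (x, [])
termination_by x
decreasing_by exact Nat.div_lt_self (by omega) (by omega)

/-- Payload encoder auxiliary: processes the (already reversed) byte list,
returning the final state and the emitted digits in emission order. -/
def payloadEncAux (m L : ℕ) : ℕ → List ℕ → ℕ × List ℕ
  | x, [] => (x, [])
  | x, b :: rest =>
      let r1 := renormP m L b x
      let r2 := payloadEncAux m L (256 * r1.1 + b) rest
      (r2.1, r1.2 ++ r2.2)

/-- Payload encoder: starts at state `L`, scans the bytes right-to-left,
returns the final state together with the payload digits in FIFO order. -/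
def payloadEncode (m L : ℕ) (bytes : List ℕ) : ℕ × List ℕ :=
  let r := payloadEncAux m L L bytes.reverse
  (r.1, r.2.reverse)

/-- Decoder-side renormalization: while `x < L`, consume the next digit `d`
and set `x ← x * m + d`.  Returns the new state and the unconsumed digits. -/
def decRenorm (m L : ℕ) : ℕ → List ℕ → ℕ × List ℕ
  | x, ds =>
    if x < L then
      match ds with
      | [] => (x, [])
      | d :: rest => decRenorm m L (x * m + d) rest
    else (x, ds)

/-- Payload decoder: runs for `n` rounds, each time outputting `x % 256`,
setting `x ← x / 256` and renormalizing.  Returns the decoded bytes,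
the final state, and the unconsumed digit suffix. -/
def payloadDecode (m L : ℕ) : ℕ → ℕ → List ℕ → List ℕ × ℕ × List ℕ
  | 0, x, ds => ([], x, ds)
  | n + 1, x, ds =>
      let r := decRenorm m L (x / 256) ds
      let rest := payloadDecode m L n r.1 r.2
      (x % 256 :: rest.1, rest.2.1, rest.2.2)

/-- The base-m-len encoder: length prefix, state prefix, payload. -/
def Encode (m L k : ℕ) (bytes : List ℕ) : List ℕ :=
  let p := payloadEncode m L bytes
  encodePrefix m k bytes.length ++ encodePrefix m k p.1 ++ p.2

/-- The base-m-len decoder. -/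
def Decode (m L k : ℕ) (ds : List ℕ) : Option (List ℕ) :=
  if ds.length < k then none
  else
    let len := decodePrefix m k ds
    if len = 0 then some []
    else
      let rest := ds.drop k
      if rest.length < k then none
      else
        let s := decodePrefix m k rest
        some (payloadDecode m L len s (rest.drop k)).1

lemma renormP_spec (m L b : ℕ) (hm : 2 ≤ m) : ∀ x,
    (renormP m L b x).1 = x / m ^ (renormP m L b x).2.length ∧
    (∀ k < (renormP m L b x).2.length, 1 ≤ x / m ^ k ∧ L * m ≤ 256 * (x / m ^ k) + b) ∧
    ((renormP m L b x).1 = 0 ∨ 256 * (renormP m L b x).1 + b < L * m) := by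
  intro x
  induction x using Nat.strong_induction_on with
  | _ x ih =>
    rw [renormP]
    split
    · rename_i h
      have hx : x / m < x := Nat.div_lt_self (by omega) (by omega)
      obtain ⟨h1, h2, h3⟩ := ih (x / m) hx
      refine ⟨?_, ?_, h3⟩
      · simp only [List.length_cons, h1]
        rw [Nat.div_div_eq_div_mul, pow_succ, mul_comm]
      · intro k hk
        simp only [List.length_cons] at hk
        match k with
        | 0 => simpa using ⟨h.1, h.2.2⟩
        | k + 1 =>
          have := h2 k (by omega)
          rwa [Nat.div_div_eq_div_mul, ← pow_succ'] at this
    · rename_i h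
      refine ⟨by simp, by simp, ?_⟩
      simp only
      omega

lemma step_bound (m L b s : ℕ) (hm : 2 ≤ m) (hL : 256 ≤ L) (hb : b < 256)
    (hs1 : 1 ≤ s) (hs2 : s < L * m) :
    1 ≤ 256 * (renormP m L b s).1 + b ∧ 256 * (renormP m L b s).1 + b < L * m ∧
    (renormP m L b s).2.length +
      (if L * m ≤ 256 * ((256 * (renormP m L b s).1 + b) / m ^ Nat.clog m 256) + 255 then 1 else 0)
      ≤ Nat.clog m 256 + (if L * m ≤ 256 * (s / m ^ Nat.clog m 256) + 255 then 1 else 0) := by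
  obtain ⟨h1, h2, h3⟩ := renormP_spec m L b hm s
  set c := Nat.clog m 256 with hc
  set j := (renormP m L b s).2.length with hj
  set X := (renormP m L b s).1 with hXdef
  have hmc : 256 ≤ m ^ c := Nat.le_pow_clog (by omega) _
  -- X ≥ 1
  have hX1 : 1 ≤ X := by
    match hjj : j with
    | 0 => rw [h1, hjj] at *; simpa using hs1
    | j' + 1 =>
      obtain ⟨ht1, ht2⟩ := h2 j' (by omega)
      set t := s / m ^ j' with htdef
      have htm : m ≤ t := by
        have : 256 * m ≤ L * m := Nat.mul_le_mul_right m hL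
        omega
      have : X = t / m := by
        rw [h1, htdef, Nat.div_div_eq_div_mul, ← pow_succ]
      rw [this]
      exact Nat.one_le_div_iff (by omega) |>.mpr htm
  have hs'1 : 1 ≤ 256 * X + b := by omega
  have hs'2 : 256 * X + b < L * m := by omega
  refine ⟨hs'1, hs'2, ?_⟩
  -- generic contradiction tool: if 256*y*m ≤ something ≤ s and L*m ≤ 256*y+255 then False
  have key : ∀ y : ℕ, m ^ (c+1) * y ≤ s → L * m ≤ 256 * y + 255 → False := by
    intro y hys hLy
    have h256 : 256 * m * y ≤ m ^ (c+1) * y := by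
      have : 256 * m ≤ m ^ c * m := Nat.mul_le_mul_right m hmc
      calc 256 * m * y ≤ m ^ c * m * y := Nat.mul_le_mul_right y this
        _ = m ^ (c+1) * y := by ring
    have hmu : m * (256 * y) ≤ s := le_trans (le_of_eq (by ring)) (le_trans h256 hys)
    have h2u : 2 * (256 * y) ≤ m * (256 * y) := Nat.mul_le_mul_right _ hm
    have h256m : 256 * m ≤ L * m := Nat.mul_le_mul_right m hL
    omega
  -- U1 : j ≤ c + 1
  have hU1 : j ≤ c + 1 := by
    by_contra hcon
    obtain ⟨hy1, hy2⟩ := h2 (c + 1) (by omega)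
    have hmul : m ^ (c+1) * (s / m ^ (c+1)) ≤ s := by
      calc m ^ (c+1) * (s / m ^ (c+1)) = (s / m ^ (c+1)) * m ^ (c+1) := by ring
        _ ≤ s := Nat.div_mul_le_self s _
    exact key (s / m ^ (c+1)) hmul (by omega)
  -- P(s') → L*m ≤ 256*X + 255
  have hPs' : L * m ≤ 256 * ((256 * X + b) / m ^ c) + 255 → L * m ≤ 256 * X + 255 := by
    intro hp
    have hdle : (256 * X + b) / m ^ c ≤ (256 * X + b) / 256 :=
      Nat.div_le_div_left hmc (by omega)
    have : (256 * X + b) / 256 = X := by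
      rw [Nat.mul_add_div (by omega)]
      simp [Nat.div_eq_of_lt hb]
    omega
  -- U2 : ¬P(s) → j ≤ c
  have hU2 : ¬ (L * m ≤ 256 * (s / m ^ c) + 255) → j ≤ c := by
    intro hps
    by_contra hcon
    obtain ⟨hy1, hy2⟩ := h2 c (by omega)
    omega
  -- U3a : P(s') → j ≠ c+1
  have hU3a : L * m ≤ 256 * ((256 * X + b) / m ^ c) + 255 → j ≠ c + 1 := by
    intro hp hjc
    have hXv : X = s / m ^ (c+1) := by rw [h1, hjc]
    have := hPs' hp
    refine key X ?_ this
    rw [hXv]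
    calc m ^ (c+1) * (s / m ^ (c+1)) = (s / m ^ (c+1)) * m ^ (c+1) := by ring
      _ ≤ s := Nat.div_mul_le_self s _
  -- U3b : P(s') ∧ ¬P(s) → j ≠ c
  have hU3b : L * m ≤ 256 * ((256 * X + b) / m ^ c) + 255 →
      ¬ (L * m ≤ 256 * (s / m ^ c) + 255) → j ≠ c := by
    intro hp hps hjc
    have hXv : X = s / m ^ c := by rw [h1, hjc]
    exact hps (hXv ▸ hPs' hp)
  split <;> split <;> rename_i ha hb2 <;> first
    | (exact by have := hU3a ha; have := hU3b ha hb2; omega)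
    | (exact by have := hU3a ha; omega)
    | (exact by have := hU2 hb2; omega)
    | omega


lemma payloadEncAux_bound (m L : ℕ) (hm : 2 ≤ m) (hL : 256 ≤ L) :
    ∀ (bs : List ℕ) (s : ℕ), (∀ b ∈ bs, b < 256) → 1 ≤ s → s < L * m →
    (payloadEncAux m L s bs).2.length ≤ bs.length * Nat.clog m 256 +
      (if L * m ≤ 256 * (s / m ^ Nat.clog m 256) + 255 then 1 else 0) := by
  intro bs
  induction bs with
  | nil => intro s _ _ _; simp [payloadEncAux]
  | cons b rest ih =>
    intro s hb hs1 hs2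
    obtain ⟨h1', h2', h3'⟩ := step_bound m L b s hm hL (hb b (by simp)) hs1 hs2
    have ihr := ih (256 * (renormP m L b s).1 + b)
      (fun x hx => hb x (by simp [hx])) h1' h2'
    simp only [payloadEncAux, List.length_append, List.length_cons]
    have hmul : (rest.length + 1) * Nat.clog m 256
        = rest.length * Nat.clog m 256 + Nat.clog m 256 := by ring
    omega


/-- Total payload digit-count bound: at most `n · ⌈log_m 256⌉ + 1` digits are
emitted for an input of `n` bytes. -/
theorem stmt16 (m L : ℕ) (hm : 2 ≤ m) (hL : 256 ≤ L)
    (hLm : L * m ≤ 2 ^ 64 - 1) (bytes : List ℕ)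
    (hbytes : ∀ b ∈ bytes, b < 256) :
    (payloadEncode m L bytes).2.length ≤ bytes.length * Nat.clog m 256 + 1 := by
  have hLlt : L < L * m := by
    have : L * 2 ≤ L * m := Nat.mul_le_mul_left L hm
    omega
  have := payloadEncAux_bound m L hm hL bytes.reverse L
    (fun b hb => hbytes b (List.mem_reverse.mp hb)) (by omega) hLlt
  simp only [payloadEncode, List.length_reverse] at *
  split at this <;> omega
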